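/- arXiv:2310.09320 — 9 statements merged into one kernel-verified Lean document; each statement's English description precedes it below -/
import Mathlib

section
/- For all natural numbers n and d and every real number ρ with 0 < ρ < 1 and 0 < (d : ℝ) < ρ·n, one has log₂ (n choose d) ≥ d·(log₂((n : ℝ)/d) + log₂(e·√(1−ρ))) − 0.5·log₂ d − 0.5·log₂(1−ρ) − 1.567. -/
/-!
Write `n.choose d * d! = n (n - 1) ⋯ (n - d + 1)`. Keeping the factor `n` apart and pairing the
factors `n - j` and `n - (d - j)` for `0 < j < d`, each pair is at least `n (n - d) ≥ (1 - ρ) n²`,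
so `(n.choose d * d!)² ≥ (1 - ρ)^(d-1) n^(2d)`. Since the Stirling sequence `d! / (√(2d) (d/e)^d)`
decreases from its value `e / √2` at `d = 1`, we have `d! ≤ e √d (d/e)^d`. Taking logarithms gives
the bound with the constant `1` in natural logarithms, and `1 < 1.567 log 2`.
-/

open Real Finset
open scoped Nat

theorem factorial_le_exp_one_mul_sqrt_mul_pow {n : ℕ} (hn : n ≠ 0) :
    (n ! : ℝ) ≤ exp 1 * √n * (n / exp 1) ^ n := by
  obtain ⟨m, rfl⟩ : ∃ m, n = m + 1 := ⟨n - 1, by omega⟩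
  have h : Stirling.stirlingSeq (m + 1) ≤ exp 1 / √2 := by
    simpa [Stirling.stirlingSeq_one] using Stirling.stirlingSeq'_antitone (Nat.zero_le m)
  have h2 : (0 : ℝ) < √2 := by positivity
  rw [Stirling.stirlingSeq, div_le_div_iff₀ (by positivity) h2,
    sqrt_mul zero_le_two] at h
  exact le_of_mul_le_mul_right (h.trans_eq (by ring)) h2

theorem sq_mul_pow_le_sq_descFactorial {n m : ℕ} (h : m + 1 ≤ n) :
    (n : ℝ) ^ 2 * (n * (n - (m + 1 : ℕ))) ^ m ≤ (n.descFactorial (m + 1) : ℝ) ^ 2 := by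
  set f : ℕ → ℝ := fun j => n - (j + 1 : ℕ)
  have hprod : (n.descFactorial (m + 1) : ℝ) = n * ∏ j ∈ range m, f j := by
    rw [Nat.descFactorial_eq_prod_range, prod_range_succ', Nat.cast_mul, Nat.cast_prod, mul_comm]
    congr 1
    refine prod_congr rfl fun j hj => ?_
    rw [Nat.cast_sub (by simp at hj; omega)]
  -- `(n - a) (n - b) = n (n - (a + b)) + a b`
  have hpair : ∀ j ∈ range m, (n : ℝ) * (n - (m + 1 : ℕ)) ≤ f j * f (m - 1 - j) := by
    intro j hj
    have hsum : ((j + 1 : ℕ) : ℝ) + ((m - 1 - j + 1 : ℕ) : ℝ) = ((m + 1 : ℕ) : ℝ) := by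
      simp at hj; exact_mod_cast (by omega : j + 1 + (m - 1 - j + 1) = m + 1)
    simp only [f]
    nlinarith [mul_nonneg (Nat.cast_nonneg (α := ℝ) (j + 1)) (Nat.cast_nonneg (α := ℝ) (m - 1 - j + 1))]
  have hnonneg : (0 : ℝ) ≤ n * (n - (m + 1 : ℕ)) :=
    mul_nonneg (Nat.cast_nonneg _) (sub_nonneg.mpr (Nat.cast_le.mpr h))
  calc (n : ℝ) ^ 2 * (n * (n - (m + 1 : ℕ))) ^ m
      = n ^ 2 * ∏ _j ∈ range m, (n * (n - (m + 1 : ℕ)) : ℝ) := by rw [prod_const, card_range]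
    _ ≤ n ^ 2 * ∏ j ∈ range m, (f j * f (m - 1 - j)) := by
      gcongr n ^ 2 * ?_
      exact prod_le_prod (fun _ _ => hnonneg) hpair
    _ = (n.descFactorial (m + 1) : ℝ) ^ 2 := by
      rw [prod_mul_distrib, prod_range_reflect f m, hprod]; ring

theorem one_sub_pow_mul_pow_le_sq_descFactorial {n d : ℕ} {ρ : ℝ} (hρ : ρ < 1) (hd : d ≠ 0)
    (hdn : d ≤ ρ * n) : (1 - ρ) ^ (d - 1) * (n : ℝ) ^ (2 * d) ≤ (n.descFactorial d : ℝ) ^ 2 := by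
  obtain ⟨m, rfl⟩ : ∃ m, d = m + 1 := ⟨d - 1, by omega⟩
  have hdn' : m + 1 ≤ n := by
    have : ((m + 1 : ℕ) : ℝ) ≤ n := by nlinarith [n.cast_nonneg (α := ℝ)]
    exact_mod_cast this
  have hgap : (1 - ρ) * (n : ℝ) ^ 2 ≤ n * (n - (m + 1 : ℕ)) := by
    nlinarith [n.cast_nonneg (α := ℝ)]
  calc (1 - ρ) ^ (m + 1 - 1) * (n : ℝ) ^ (2 * (m + 1))
      = (n : ℝ) ^ 2 * ((1 - ρ) * (n : ℝ) ^ 2) ^ m := by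
        rw [Nat.add_sub_cancel, mul_pow, ← pow_mul]; ring
    _ ≤ (n : ℝ) ^ 2 * (n * (n - (m + 1 : ℕ))) ^ m := by
        gcongr
    _ ≤ _ := sq_mul_pow_le_sq_descFactorial hdn'

theorem le_log_choose {n d : ℕ} {ρ : ℝ} (hρ : ρ < 1) (hd : d ≠ 0) (hdn : d ≤ ρ * n) :
    d * (log (n / d) + 1 + log (1 - ρ) / 2) - log d / 2 - log (1 - ρ) / 2 - 1
      ≤ log (n.choose d) := by
  have hd0 : (0 : ℝ) < d := by positivity
  have hn0 : (0 : ℝ) < n := by nlinarith [n.cast_nonneg (α := ℝ)]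
  have hdn' : d ≤ n := by exact_mod_cast (show (d : ℝ) ≤ n by nlinarith)
  have hC : (0 : ℝ) < n.choose d := by exact_mod_cast Nat.choose_pos hdn'
  have hρ' : 0 < 1 - ρ := by linarith
  have hsq : (1 - ρ) ^ (d - 1) * (n : ℝ) ^ (2 * d)
      ≤ (n.choose d * (exp 1 * √d * (d / exp 1) ^ d)) ^ 2 := by
    refine (one_sub_pow_mul_pow_le_sq_descFactorial hρ hd hdn).trans ?_
    rw [Nat.descFactorial_eq_factorial_mul_choose, Nat.cast_mul, mul_comm]
    gcongr
    exact factorial_le_exp_one_mul_sqrt_mul_pow hd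
  have hlog := log_le_log (by positivity) hsq
  rw [log_pow, log_mul (by positivity) (by positivity), log_mul hC.ne' (by positivity),
    log_mul (by positivity) (by positivity), log_mul (by positivity) (by positivity),
    log_pow, log_pow, log_exp, log_sqrt hd0.le, log_pow,
    log_div hd0.ne' (exp_ne_zero 1), log_exp, Nat.cast_sub (by omega : 1 ≤ d)] at hlog
  rw [log_div hn0.ne' hd0.ne']
  push_cast at hlog
  linarith

theorem stmt_0_general (n d : ℕ) (ρ : ℝ) (hρ1 : ρ < 1)
    (hd0 : 0 < (d : ℝ)) (hdn : (d : ℝ) < ρ * n) :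
    Real.logb 2 (n.choose d) ≥
      (d : ℝ) * (Real.logb 2 ((n : ℝ) / d) + Real.logb 2 (Real.exp 1 * Real.sqrt (1 - ρ)))
        - 0.5 * Real.logb 2 d - 0.5 * Real.logb 2 (1 - ρ) - 1.567 := by
  have hlog := le_log_choose hρ1 (by exact_mod_cast hd0.ne') hdn.le
  have hlog2 : 1 < 1.567 * log 2 := by linarith [log_two_gt_d9]
  have hρ' : 0 < 1 - ρ := by linarith
  simp only [logb, ge_iff_le]
  rw [log_mul (exp_ne_zero 1) (by positivity), log_exp, log_sqrt hρ'.le]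
  rw [show ∀ a b c : ℝ, (d : ℝ) * (a / log 2 + (1 + b / 2) / log 2) - 0.5 * (c / log 2)
      - 0.5 * (b / log 2) - 1.567 = (d * (a + 1 + b / 2) - c / 2 - b / 2 - 1.567 * log 2) / log 2
      from fun a b c => by field_simp; ring]
  gcongr
  linarith

theorem stmt_0 (n d : ℕ) (ρ : ℝ) (hρ0 : 0 < ρ) (hρ1 : ρ < 1)
    (hd0 : 0 < (d : ℝ)) (hdn : (d : ℝ) < ρ * n) :
    Real.logb 2 (n.choose d) ≥
      (d : ℝ) * (Real.logb 2 ((n : ℝ) / d) + Real.logb 2 (Real.exp 1 * Real.sqrt (1 - ρ)))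
        - 0.5 * Real.logb 2 d - 0.5 * Real.logb 2 (1 - ρ) - 1.567 :=
  stmt_0_general n d ρ hρ1 hd0 hdn
end

section
/- For all natural numbers n and d with 0 < d and 2·d ≤ n, writing r = (n : ℝ)/d, one has log₂ (n choose d) ≥ d·(log₂ r + (r − 1)·log₂(r/(r − 1))) − 0.5·log₂ d − 1.5. -/
/-!
Write log C(n,d) = log n! - log d! - log (n-d)!. Stirling's lower bound `√π ≤ stirlingSeq k`,
together with `stirlingSeq k ≤ stirlingSeq 2 = e² / 4` for `k ≥ 2` (the sequence decreases),
gives log C(n,d) ≥ n H(d/n) - ½ log d - 3/2 log 2, where H is the binary entropy in nats; the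
constant works out because e⁸ ≤ 1024 π. For d = 1 the bound comes instead from
(n-1) log (n/(n-1)) ≤ 1 < 3/2 log 2. With r = n/d one has
d (log r + (r-1) log (r/(r-1))) = n H(d/n), and dividing by log 2 converts to bits.
-/
open Real
open scoped Nat

namespace Stirling

theorem stirlingSeq_two : stirlingSeq 2 = exp 1 ^ 2 / 4 := by
  have h : √(2 * (2 : ℝ)) = 2 := by
    rw [show 2 * (2 : ℝ) = 2 ^ 2 by norm_num, sqrt_sq zero_le_two]
  simp only [stirlingSeq, Nat.cast_ofNat, h, Nat.factorial_two]
  field_simp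
  norm_num

theorem stirlingSeq_le_stirlingSeq_two {n : ℕ} (hn : 2 ≤ n) :
    stirlingSeq n ≤ exp 1 ^ 2 / 4 := by
  obtain ⟨m, rfl⟩ := Nat.exists_eq_add_of_le' hn
  rw [← stirlingSeq_two]
  exact stirlingSeq'_antitone (show 1 ≤ m + 1 by omega)

theorem log_factorial_le_stirling {n : ℕ} (hn : 2 ≤ n) :
    log n ! ≤ n * log n - n + log n / 2 + 2 - 3 / 2 * log 2 := by
  have hn0 : (0 : ℝ) < n := by positivity
  have h : (n ! : ℝ) ≤ exp 1 ^ 2 / 4 * (√(2 * n) * (n / exp 1) ^ n) := by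
    rw [← div_le_iff₀ (by positivity)]
    exact stirlingSeq_le_stirlingSeq_two hn
  calc log n ! ≤ log (exp 1 ^ 2 / 4 * (√(2 * n) * (n / exp 1) ^ n)) :=
        log_le_log (by positivity) h
    _ = _ := by
      rw [log_mul (by positivity) (by positivity), log_mul (by positivity) (by positivity),
        log_div (by positivity) (by norm_num), log_pow, log_exp, log_sqrt (by positivity),
        log_mul (by norm_num) hn0.ne', log_pow, log_div hn0.ne' (exp_pos 1).ne', log_exp,
        show (4 : ℝ) = 2 ^ 2 by norm_num, log_pow]
      push_cast
      ring

end Stirling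

theorem mul_binEntropy_div {n d : ℝ} (hd : 0 < d) (hdn : d < n) :
    n * binEntropy (d / n) = n * log n - d * log d - (n - d) * log (n - d) := by
  have hn : 0 < n := hd.trans hdn
  have hnd : 0 < n - d := sub_pos.2 hdn
  rw [binEntropy, inv_div, one_sub_div hn.ne', inv_div, log_div hn.ne' hd.ne',
    log_div hn.ne' hnd.ne']
  field_simp
  ring

theorem mul_binEntropy_inv_le {x : ℝ} (hx : 1 < x) : x * binEntropy x⁻¹ ≤ log x + 1 := by
  have hx0 : 0 < x := one_pos.trans hx
  have hx1 : 0 < x - 1 := sub_pos.2 hx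
  calc x * binEntropy x⁻¹ = log x + (x - 1) * log (x / (x - 1)) := by
        rw [← one_div, mul_binEntropy_div one_pos hx, log_one, log_div hx0.ne' hx1.ne']
        ring
    _ ≤ log x + (x - 1) * (x / (x - 1) - 1) := by
        gcongr
        exact log_le_sub_one_of_pos (div_pos hx0 hx1)
    _ = log x + 1 := by
        field_simp
        ring

theorem eight_le_log_pi_add_ten_mul_log_two : 8 ≤ log π + 10 * log 2 := by
  rw [← log_rpow zero_lt_two, ← log_mul pi_pos.ne' (by positivity), ← log_exp 8]
  apply log_le_log (exp_pos 8)
  have he : exp 8 ≤ 2.7182818286 ^ 8 := by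
    rw [show (8 : ℝ) = (8 : ℕ) * 1 by norm_num, exp_nat_mul]
    exact pow_le_pow_left₀ (exp_pos 1).le exp_one_lt_d9.le 8
  have : (2 : ℝ) ^ (10 : ℝ) = 1024 := by norm_num
  nlinarith [pi_gt_three]

theorem log_choose_ge_of_two_le {n d : ℕ} (hd : 2 ≤ d) (hdn : 2 * d ≤ n) :
    n * binEntropy (d / n) - log d / 2 - 3 / 2 * log 2 ≤ log (n.choose d) := by
  have hd0 : (0 : ℝ) < d := by positivity
  have hdn' : (d : ℝ) < n := by exact_mod_cast (show d < n by omega)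
  have hnd : ((n - d : ℕ) : ℝ) = n - d := Nat.cast_sub (by omega)
  have hsplit : log n ! = log (n.choose d) + log d ! + log (n - d)! := by
    rw [← Nat.choose_mul_factorial_mul_factorial (show d ≤ n by omega)]
    have hchoose : (0 : ℝ) < n.choose d := by
      exact_mod_cast Nat.choose_pos (show d ≤ n by omega)
    push_cast
    rw [log_mul (by positivity) (by positivity), log_mul hchoose.ne' (by positivity)]
  have hn_fact := Stirling.le_log_factorial_stirling (show n ≠ 0 by omega)
  have hd_fact := Stirling.log_factorial_le_stirling hd
  have hnd_fact := Stirling.log_factorial_le_stirling (show 2 ≤ n - d by omega)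
  have hlog : log ((n - d : ℕ) : ℝ) ≤ log n :=
    log_le_log (by rw [hnd]; linarith) (by rw [hnd]; linarith)
  rw [mul_binEntropy_div hd0 hdn']
  rw [hnd] at hnd_fact hlog
  rw [log_mul two_ne_zero pi_pos.ne'] at hn_fact
  linarith [eight_le_log_pi_add_ten_mul_log_two]

theorem log_choose_ge {n d : ℕ} (hd : 0 < d) (hdn : 2 * d ≤ n) :
    n * binEntropy (d / n) - log d / 2 - 3 / 2 * log 2 ≤ log (n.choose d) := by
  obtain rfl | hd := (Nat.one_le_iff_ne_zero.2 hd.ne').eq_or_lt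
  · have h := mul_binEntropy_inv_le (show (1 : ℝ) < n by exact_mod_cast (show 1 < n by omega))
    rw [Nat.choose_one_right, Nat.cast_one, one_div, log_one]
    linarith [log_two_gt_d9]
  · exact log_choose_ge_of_two_le hd hdn

theorem mul_log_div_add_eq_mul_binEntropy {n d : ℝ} (hd : 0 < d) (hdn : d < n) :
    d * (log (n / d) + (n / d - 1) * log (n / d / (n / d - 1))) = n * binEntropy (d / n) := by
  have hn : 0 < n := hd.trans hdn
  have hnd : 0 < n - d := sub_pos.2 hdn
  have hr : n / d - 1 = (n - d) / d := by field_simp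
  rw [mul_binEntropy_div hd hdn, hr, div_div_div_cancel_right₀ hd.ne', log_div hn.ne' hd.ne',
    log_div hn.ne' hnd.ne']
  field_simp
  ring

theorem stmt_2 (n d : ℕ) (hd : 0 < d) (hdn : 2 * d ≤ n) :
    Real.logb 2 (n.choose d) ≥
      (d : ℝ) * (Real.logb 2 ((n : ℝ) / d)
          + ((n : ℝ) / d - 1) * Real.logb 2 (((n : ℝ) / d) / ((n : ℝ) / d - 1)))
        - 0.5 * Real.logb 2 d - 1.5 := by
  have hd0 : (0 : ℝ) < d := by exact_mod_cast hd
  have hdn' : (d : ℝ) < n := by exact_mod_cast (show d < n by omega)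
  have key := log_choose_ge hd hdn
  rw [← mul_log_div_add_eq_mul_binEntropy hd0 hdn'] at key
  have hlog2 : 0 < log 2 := log_pos one_lt_two
  calc _ = ((d : ℝ) * (log ((n : ℝ) / d)
              + ((n : ℝ) / d - 1) * log ((n : ℝ) / d / ((n : ℝ) / d - 1)))
            - log d / 2 - 3 / 2 * log 2) / log 2 := by
        simp only [logb]
        field_simp
        ring
    _ ≤ logb 2 (n.choose d) := div_le_div_of_nonneg_right key hlog2.le
end

section
/- For every real number r with r > 21/8, one has (r − 1)·log₂(r/(r − 1)) > 1.1243. -/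
/-! The function `t ↦ t · log (1 + 1/t)` is nondecreasing on `(0, ∞)`: for `0 < a ≤ t`, Bernoulli's
inequality with the exponent `a / t ≤ 1` gives `(1 + 1/a) ^ (a/t) ≤ 1 + 1/t`. With `t = r - 1`
the claim therefore reduces to its value at `r = 21/8`, namely `(13/8) · log₂ (21/13) > 1.1243`,
which is the integer inequality `2 ^ 2104 · 13 ^ 3041 < 21 ^ 3041`. -/

open Real

theorem rpow_one_add_inv_le_one_add_inv {a t : ℝ} (ha : 0 < a) (hat : a ≤ t) :
    (1 + a⁻¹) ^ (a / t) ≤ 1 + t⁻¹ := by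
  have ht : 0 < t := ha.trans_le hat
  calc (1 + a⁻¹) ^ (a / t) ≤ 1 + a / t * a⁻¹ :=
        rpow_one_add_le_one_add_mul_self (by linarith [inv_pos.2 ha]) (by positivity)
          ((div_le_one ht).2 hat)
    _ = 1 + t⁻¹ := by field_simp

theorem mul_log_one_add_inv_le {a t : ℝ} (ha : 0 < a) (hat : a ≤ t) :
    a * log (1 + a⁻¹) ≤ t * log (1 + t⁻¹) := by
  have ht : 0 < t := ha.trans_le hat
  have hlog : a / t * log (1 + a⁻¹) ≤ log (1 + t⁻¹) := by
    rw [← log_rpow (by positivity)]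
    exact log_le_log (by positivity) (rpow_one_add_inv_le_one_add_inv ha hat)
  calc a * log (1 + a⁻¹) = t * (a / t * log (1 + a⁻¹)) := by field_simp
    _ ≤ t * log (1 + t⁻¹) := mul_le_mul_of_nonneg_left hlog ht.le

theorem log_two_mul_lt_log_21_div_13 : (1.1243 : ℝ) * log 2 < 13 / 8 * log (21 / 13) := by
  have hpow : (2 : ℝ) ^ 2104 < (21 / 13) ^ 3041 := by
    rw [div_pow, lt_div_iff₀ (by positivity)]
    exact_mod_cast (by decide +kernel : 2 ^ 2104 * 13 ^ 3041 < 21 ^ 3041)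
  have hlog : 2104 * log 2 < 3041 * log (21 / 13) := by
    simpa only [log_pow, Nat.cast_ofNat] using log_lt_log (by positivity) hpow
  linarith [log_pos one_lt_two]

theorem stmt_4 (r : ℝ) (hr : r > 21 / 8) :
    (r - 1) * Real.logb 2 (r / (r - 1)) > 1.1243 := by
  have ht : 0 < r - 1 := by linarith
  have hratio : r / (r - 1) = 1 + (r - 1)⁻¹ := by field_simp; ring
  have hmono : 13 / 8 * log (21 / 13) ≤ (r - 1) * log (1 + (r - 1)⁻¹) := by
    convert mul_log_one_add_inv_le (a := 13 / 8) (t := r - 1) (by norm_num) (by linarith) using 3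
    norm_num
  rw [gt_iff_lt, hratio, logb, ← mul_div_assoc, lt_div_iff₀ (log_pos one_lt_two)]
  linarith [log_two_mul_lt_log_21_div_13]
end

section
/- For all real numbers n and d with n > 0 and 1 ≤ d ≤ n/4, one has 1.431·d·(log₂(n/d) + 1) ≤ 1.07325·n. -/
open Real

lemma logb_two_add_one_le (x : ℝ) (hx : 4 ≤ x) : logb 2 x + 1 ≤ 3 / 4 * x := by
  have hx4 : 0 < x / 4 := by linarith
  have hlog2 : 1 / 3 < log 2 := by linarith [log_two_gt_d9]
  have hsplit : logb 2 x = logb 2 (x / 4) + 2 := by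
    rw [logb_div (by linarith) (by norm_num), show (4 : ℝ) = 2 ^ (2 : ℝ) by norm_num,
      logb_rpow (by norm_num) (by norm_num)]
    ring
  have hquarter : logb 2 (x / 4) ≤ 3 * (x / 4 - 1) := by
    rw [logb, div_le_iff₀ (by linarith)]
    nlinarith [log_le_sub_one_of_pos hx4]
  linarith

lemma mul_logb_two_div_add_one_le {n d : ℝ} (hd : 0 < d) (hdn : 4 * d ≤ n) :
    d * (logb 2 (n / d) + 1) ≤ 3 / 4 * n := by
  have hratio : 4 ≤ n / d := by rwa [le_div_iff₀ hd]
  calc d * (logb 2 (n / d) + 1) ≤ d * (3 / 4 * (n / d)) :=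
        mul_le_mul_of_nonneg_left (logb_two_add_one_le _ hratio) hd.le
    _ = 3 / 4 * n := by field_simp

theorem stmt_5_general (n d : ℝ) (hd1 : 1 ≤ d) (hd2 : d ≤ n / 4) :
    1.431 * d * (Real.logb 2 (n / d) + 1) ≤ 1.07325 * n := by
  have key := mul_logb_two_div_add_one_le (n := n) (d := d) (by linarith) (by linarith)
  calc 1.431 * d * (logb 2 (n / d) + 1) = 1.431 * (d * (logb 2 (n / d) + 1)) := by ring
    _ ≤ 1.431 * (3 / 4 * n) := by gcongr
    _ = 1.07325 * n := by norm_num [← mul_assoc]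

theorem stmt_5 (n d : ℝ) (hn : n > 0) (hd1 : 1 ≤ d) (hd2 : d ≤ n / 4) :
    1.431 * d * (Real.logb 2 (n / d) + 1) ≤ 1.07325 * n :=
  stmt_5_general n d hd1 hd2
end

section
/- For every real number d ≥ 1, one has (log₂ 5 − 0.688)·d − 0.5·(log₂ d)² − (log₂(5/3) + 1.5)·log₂ d > 0. -/
/-! Put `x = log₂ d ≥ 0`, so that `d = 2 ^ x ≥ exp (0.693 x)`. Bounding `log₂ 5` from below
and `log₂ (5/3)` from above by rationals, it suffices that `0.5 x² + 2.239 x` stays below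
`1.632` times the degree-5 Taylor polynomial of `exp (0.693 x)`, a polynomial inequality on
`x ≥ 0`; it is tight near `x = 1.88`. -/

open Real Finset

theorem div_le_logb_of_pow_le {b a : ℝ} {p q : ℕ} (hb : 1 < b) (hq : 0 < q)
    (h : b ^ p ≤ a ^ q) : (p : ℝ) / q ≤ logb b a := by
  have hlog := log_le_log (by positivity) h
  rw [log_pow, log_pow] at hlog
  rw [logb, div_le_div_iff₀ (by positivity) (log_pos hb)]
  linarith

theorem logb_le_div_of_pow_le {b a : ℝ} {p q : ℕ} (hb : 1 < b) (ha : 0 < a) (hq : 0 < q)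
    (h : a ^ q ≤ b ^ p) : logb b a ≤ (p : ℝ) / q := by
  have hlog := log_le_log (by positivity) h
  rw [log_pow, log_pow] at hlog
  rw [logb, div_le_div_iff₀ (log_pos hb) (by positivity)]
  linarith

theorem sum_range_pow_div_factorial_le_rpow {b c x : ℝ} (hb : 0 < b) (hc : 0 ≤ c)
    (hcb : c ≤ log b) (hx : 0 ≤ x) (n : ℕ) :
    ∑ i ∈ range n, (c * x) ^ i / i.factorial ≤ b ^ x :=
  calc ∑ i ∈ range n, (c * x) ^ i / i.factorial ≤ exp (c * x) :=
        sum_le_exp_of_nonneg (mul_nonneg hc hx) n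
    _ ≤ exp (log b * x) := by gcongr
    _ = b ^ x := by rw [rpow_def_of_pos hb]

theorem quadratic_lt_exp_taylor_five {x : ℝ} (hx : 0 ≤ x) :
    0.5 * x ^ 2 + 2.239 * x < 1.632 * ∑ i ∈ range 6, (0.693 * x) ^ i / i.factorial := by
  simp only [sum_range_succ, sum_range_zero, Nat.factorial]
  push_cast
  nlinarith [sq_nonneg (x - 1.881), mul_nonneg hx (sq_nonneg (x - 1.881)),
    mul_nonneg (mul_nonneg hx hx) (sq_nonneg (x - 1.881)),
    sq_nonneg (x * (x - 1.881)), mul_nonneg hx (sq_nonneg (x * (x - 1.881)))]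

theorem stmt_7 (d : ℝ) (hd : 1 ≤ d) :
    (Real.logb 2 5 - 0.688) * d - 0.5 * (Real.logb 2 d) ^ 2
      - (Real.logb 2 (5 / 3) + 1.5) * Real.logb 2 d > 0 := by
  set x := logb 2 d
  have hx : 0 ≤ x := logb_nonneg one_lt_two hd
  have hlog5 : (58 : ℝ) / 25 ≤ logb 2 5 := by
    exact_mod_cast div_le_logb_of_pow_le (b := 2) (a := 5) (p := 58) (q := 25) one_lt_two
      (by norm_num) (by norm_num)
  have hlog53 : logb 2 (5 / 3) ≤ (31 : ℝ) / 42 := by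
    exact_mod_cast logb_le_div_of_pow_le (p := 31) (q := 42) one_lt_two (by norm_num)
      (by norm_num) (by norm_num)
  have hlog2 : (0.693 : ℝ) ≤ log 2 := by linarith [log_two_gt_d9]
  have hd_taylor : ∑ i ∈ range 6, (0.693 * x) ^ i / i.factorial ≤ d := by
    calc _ ≤ (2 : ℝ) ^ x := sum_range_pow_div_factorial_le_rpow two_pos (by norm_num) hlog2 hx 6
      _ = d := rpow_logb two_pos (by norm_num) (by linarith)
  have hpoly := quadratic_lt_exp_taylor_five hx
  have hlin : (logb 2 (5 / 3) + 1.5) * x ≤ 2.239 * x := by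
    gcongr
    linarith
  have hcd : 1.632 * d ≤ (logb 2 5 - 0.688) * d := by
    gcongr
    linarith
  linarith
end

section
/- For every real number x ≥ 3, one has 1.431·(log₂(1 + 3·2^(x−3)) + 1.1242) ≥ x + 1. -/
/-!
Write `t = 2^(x-3) ≥ 1`. Near `x = 3` the crude bound `log₂(1 + 3t) ≥ log₂ 4 = 2` already has
enough slack; once `x ≥ 10/3` the bound `log₂(1 + 3t) ≥ log₂ 3 + (x - 3)` wins, because the left
side then grows with slope `1.431 > 1` in `x`. The only numerics needed are `log₂ 3 ≥ 19/12`,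
i.e. `2^19 ≤ 3^12`.
-/

open Real

lemma two_le_logb_one_add_three_mul_rpow {y : ℝ} (hy : 0 ≤ y) :
    2 ≤ logb 2 (1 + 3 * (2 : ℝ) ^ y) := by
  have hone : (1 : ℝ) ≤ 2 ^ y := one_le_rpow (by norm_num) hy
  have hfour : (2 : ℝ) ^ (2 : ℝ) = 4 := by norm_num
  rw [le_logb_iff_rpow_le (by norm_num) (by positivity), hfour]
  linarith

lemma add_logb_le_logb_one_add_mul_rpow {b c : ℝ} (hb : 1 < b) (hc : 0 < c) (y : ℝ) :
    y + logb b c ≤ logb b (1 + c * b ^ y) := by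
  have hby : 0 < b ^ y := rpow_pos_of_pos (by linarith) y
  calc y + logb b c = logb b (c * b ^ y) := by
        rw [logb_mul hc.ne' hby.ne', logb_rpow (by linarith) hb.ne', add_comm]
    _ ≤ logb b (1 + c * b ^ y) := logb_le_logb_of_le hb (by positivity) (by linarith)

lemma nineteen_div_twelve_le_logb_two_three : 19 / 12 ≤ logb 2 (3 : ℝ) := by
  have h : (19 : ℝ) * log 2 ≤ 12 * log 3 := by
    have := log_le_log (by norm_num) (show (2 : ℝ) ^ 19 ≤ 3 ^ 12 by norm_num)
    rwa [log_pow, log_pow] at this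
  rw [logb, le_div_iff₀ (log_pos (by norm_num))]
  linarith

theorem stmt_9 (x : ℝ) (hx : 3 ≤ x) :
    1.431 * (Real.logb 2 (1 + 3 * (2 : ℝ) ^ (x - 3)) + 1.1242) ≥ x + 1 := by
  rcases le_total x (10 / 3) with hnear | hfar
  · have hlog := two_le_logb_one_add_three_mul_rpow (sub_nonneg.2 hx)
    linarith
  · have hlog := add_logb_le_logb_one_add_mul_rpow one_lt_two three_pos (x - 3)
    have hlog3 := nineteen_div_twelve_le_logb_two_three
    linarith
end

section
/- For every real number x ≥ 6, one has 1.431·(log₂(1 + 3·2^(x−3)) + 1.1242) ≥ x + 2. -/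
/-!
Since `1 + 3·2^(x-3) > 3·2^(x-3)`, its base-2 logarithm exceeds `x - 3 + log₂ 3 ≥ x - 1.416`,
using `log₂ 3 ≥ 1.584`, i.e. `2^198 ≤ 3^125`. The claim then reduces to the linear inequality
`1.431·(x - 0.2918) ≥ x + 2`, which holds for `x ≥ 5.61`.
-/

open Real

theorem logb_two_three_ge : 1.584 ≤ logb 2 3 := by
  rw [le_logb_iff_rpow_le one_lt_two three_pos]
  have h : ((2 : ℝ) ^ (1.584 : ℝ)) ^ (125 : ℝ) ≤ (3 : ℝ) ^ (125 : ℝ) := by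
    rw [← rpow_mul zero_le_two]
    norm_num
  exact (rpow_le_rpow_iff (by positivity) three_pos.le (by norm_num)).1 h

theorem add_logb_lt_logb_one_add_mul_rpow {b c : ℝ} (hb : 1 < b) (hc : 0 < c) (y : ℝ) :
    y + logb b c < logb b (1 + c * b ^ y) := by
  have hby : 0 < b ^ y := rpow_pos_of_pos (zero_lt_one.trans hb) y
  calc y + logb b c = logb b (c * b ^ y) := by
        rw [logb_mul hc.ne' hby.ne', logb_rpow (zero_lt_one.trans hb) hb.ne', add_comm]
    _ < logb b (1 + c * b ^ y) := logb_lt_logb hb (mul_pos hc hby) (lt_one_add _)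

theorem stmt_10 (x : ℝ) (hx : 6 ≤ x) :
    1.431 * (Real.logb 2 (1 + 3 * (2 : ℝ) ^ (x - 3)) + 1.1242) ≥ x + 2 := by
  have hlog := add_logb_lt_logb_one_add_mul_rpow one_lt_two three_pos (x - 3)
  linarith [logb_two_three_ge]
end

section
/- For every real number x ≥ 6, one has 1.431·(log₂(1 + 5·2^(x−3)) + 1.1242) ≥ x + 3. -/
/-! Dropping the `1` inside the logarithm gives `log₂ (5·2^(x−3)) = log₂ 5 + x − 3 ≥ x − 3/4`
(as `2⁹ ≤ 5⁴`); the claim then reduces to the linear inequality `0.431·x ≥ 2.4645`,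
which holds for `x ≥ 5.72`. -/

open Real

lemma nine_fourths_le_logb_two_five : (9 / 4 : ℝ) ≤ logb 2 5 := by
  have h : logb 2 ((2 : ℝ) ^ 9) ≤ logb 2 ((5 : ℝ) ^ 4) :=
    logb_le_logb_of_le one_lt_two (by positivity) (by norm_num)
  rw [logb_pow, logb_pow, logb_self_eq_one one_lt_two] at h
  push_cast at h
  linarith

lemma logb_add_le_logb_one_add_mul_rpow {b c : ℝ} (hb : 1 < b) (hc : 0 < c) (y : ℝ) :
    logb b c + y ≤ logb b (1 + c * b ^ y) := by
  have hby : 0 < b ^ y := rpow_pos_of_pos (by linarith) y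
  calc logb b c + y = logb b (c * b ^ y) := by
        rw [logb_mul hc.ne' hby.ne', logb_rpow (by linarith) hb.ne']
    _ ≤ logb b (1 + c * b ^ y) := logb_le_logb_of_le hb (by positivity) (by linarith)

theorem stmt_12 (x : ℝ) (hx : 6 ≤ x) :
    1.431 * (Real.logb 2 (1 + 5 * (2 : ℝ) ^ (x - 3)) + 1.1242) ≥ x + 3 := by
  have hdrop := logb_add_le_logb_one_add_mul_rpow one_lt_two (by norm_num : (0 : ℝ) < 5) (x - 3)
  have hlog5 := nine_fourths_le_logb_two_five
  linarith
end

section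
/- The function x ↦ 1.431·(log₂(1 + 3·2^(x−3)) + 1.1242) − (x + 1) is monotonically increasing on the interval [3, ∞) of real numbers. -/
open Real Set

lemma hasDerivAt_logb_one_add_mul_rpow {b a s : ℝ} (hb₀ : 0 < b) (hb₁ : b ≠ 1) (x : ℝ)
    (hx : 1 + a * b ^ (x - s) ≠ 0) :
    HasDerivAt (fun y => logb b (1 + a * b ^ (y - s)))
      (a * b ^ (x - s) / (1 + a * b ^ (x - s))) x := by
  have hlog : log b ≠ 0 := log_ne_zero_of_pos_of_ne_one hb₀ hb₁
  have hpow : HasDerivAt (fun y => 1 + a * b ^ (y - s)) (a * (log b * 1 * b ^ (x - s))) x :=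
    (((hasDerivAt_id x).sub_const s).const_rpow hb₀ |>.const_mul a).const_add 1
  exact ((hpow.log hx).div_const (log b)).congr_deriv (by field_simp)

theorem monotoneOn_mul_logb_one_add_mul_rpow_sub {b a c s : ℝ} (hb : 1 < b) (ha : 0 < a)
    (hca : 1 ≤ (c - 1) * a) :
    MonotoneOn (fun x => c * logb b (1 + a * b ^ (x - s)) - x) (Ici s) := by
  have hden (x : ℝ) : 0 < 1 + a * b ^ (x - s) := by
    have := rpow_pos_of_pos (zero_lt_one.trans hb) (x - s); positivity
  have hderiv (x : ℝ) := ((hasDerivAt_logb_one_add_mul_rpow (zero_lt_one.trans hb) hb.ne' x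
    (hden x).ne').const_mul c).sub (hasDerivAt_id x)
  refine monotoneOn_of_hasDerivWithinAt_nonneg (convex_Ici s)
    (fun x _ => (hderiv x).continuousAt.continuousWithinAt)
    (fun x _ => (hderiv x).hasDerivWithinAt) fun x hx => ?_
  rw [interior_Ici, mem_Ioi] at hx
  have hu : 1 ≤ b ^ (x - s) := one_le_rpow hb.le (sub_nonneg.2 hx.le)
  rw [sub_nonneg, mul_div_assoc', le_div_iff₀ (hden x)]
  -- with `u = b ^ (x - s) ≥ 1` the goal is `1 + a * u ≤ c * a * u`, i.e. `1 ≤ (c - 1) * a * u`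
  nlinarith

theorem stmt_14 :
    MonotoneOn
      (fun x : ℝ => 1.431 * (Real.logb 2 (1 + 3 * (2 : ℝ) ^ (x - 3)) + 1.1242) - (x + 1))
      (Set.Ici 3) := by
  have hmono := monotoneOn_mul_logb_one_add_mul_rpow_sub (b := 2) (a := 3) (c := 1.431) (s := 3)
    one_lt_two three_pos (by norm_num)
  convert hmono.add_const (1.431 * 1.1242 - 1) using 2 with x
  ring
end
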